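/- Let P ⊂ F² be finite, p, q ∈ P distinct, and suppose v⁽⁰⁾ ≤ v⁽¹⁾ ≤ ⋯ in ℤ_{≥0}^P is a sequence of vectors, coordinatewise nondecreasing and strictly increasing at the coordinate p, with v⁽ʳ⁺¹⁾ ≥ v⁽ʳ⁾ + e_p. Then Σ_{r≥0} b_p(v⁽ʳ⁾, n) − Σ_{r≥0} b_p(v⁽ʳ⁾, n−1) ≤ n+1, where b_p(v,n) = dim T(v,n) − dim T(v+e_p,n) and T(v,n) is the space of polynomials of degree ≤ n vanishing to order ≥ v_r at each r ∈ P. -/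

import Mathlib

open MvPolynomial

variable {F : Type*} [Field F]

/-- The subspace of polynomials in `F[x,y]` vanishing to order at least `m` at `p`:
all monomials of total degree `< m` in the Taylor expansion around `p` have zero
coefficient. -/
noncomputable def vanishingSubmodule (p : Fin 2 → F) (m : ℕ) :
    Submodule F (MvPolynomial (Fin 2) F) :=
  ⨅ (ω : Fin 2 →₀ ℕ) (_ : (ω.sum fun _ e => e) < m),
    LinearMap.ker ((lcoeff F ω).comp
      (aeval (fun i => X i + C (p i)) :
        MvPolynomial (Fin 2) F →ₐ[F] MvPolynomial (Fin 2) F).toLinearMap)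

/-- `T(v, n)`: the subspace of polynomials of degree at most `n` vanishing to order at
least `v p` at each point `p ∈ P`. -/
noncomputable def T (P : Finset (Fin 2 → F)) (v : (Fin 2 → F) → ℕ) (n : ℕ) :
    Submodule F (MvPolynomial (Fin 2) F) :=
  restrictTotalDegree (Fin 2) F n ⊓ ⨅ p ∈ P, vanishingSubmodule p (v p)

/-- `b_p(v, n) = dim T(v,n) − dim T(v + e_p, n)`. -/
noncomputable def b [DecidableEq (Fin 2 → F)] (P : Finset (Fin 2 → F)) (p : Fin 2 → F)
    (v : (Fin 2 → F) → ℕ) (n : ℕ) : ℕ :=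
  Module.finrank F (T P v n) - Module.finrank F (T P (Function.update v p (v p + 1)) n)

/-! Write `d_v(n) = dim T(v,n) − dim T(v,n−1)`, so that
`b_p(v,n) − b_p(v,n−1) = d_v(n) − d_{v+e_p}(n)`. For `v ≤ w`, comparing the dimensions of
`T(w,n) + T(v,n−1) ⊆ T(v,n)` and `T(w,n) ∩ T(v,n−1) ⊆ T(w,n−1)` shows `d_w(n) ≤ d_v(n)`.
Hence `d_{v⁽ʳ⁺¹⁾}(n) ≤ d_{v⁽ʳ⁾+e_p}(n)`, and the sum over `r` telescopes to at most `d_{v⁽⁰⁾}(n)`,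
which is bounded by the number `n + 1` of monomials of degree `n`. The sums are finite because
`T(v,n) = 0` once `v_p > n`, and `v⁽ʳ⁾_p ≥ r`. -/

open Module Finset

namespace MvPolynomial

variable {σ τ R : Type*}

theorem restrictTotalDegree_mono [CommSemiring R] {m n : ℕ} (h : m ≤ n) :
    restrictTotalDegree σ R m ≤ restrictTotalDegree σ R n :=
  restrictSupport_mono R fun _ hω => le_trans hω h

theorem finrank_restrictSupport [CommRing R] [StrongRankCondition R] (s : Set (σ →₀ ℕ)) :
    finrank R (restrictSupport R s) = s.ncard := by
  rw [finrank_eq_nat_card_basis (basisRestrictSupport R s), Nat.card_coe_set_eq]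

theorem finrank_restrictTotalDegree_succ_le [CommRing R] [StrongRankCondition R] [Fintype σ]
    [DecidableEq σ] (m : ℕ) :
    finrank R (restrictTotalDegree σ R (m + 1)) ≤
      finrank R (restrictTotalDegree σ R m) + #((univ : Finset σ).finsuppAntidiag (m + 1)) := by
  have hsplit : {ω : σ →₀ ℕ | (ω.sum fun _ e => e) ≤ m + 1} =
      {ω | (ω.sum fun _ e => e) ≤ m} ∪ ↑((univ : Finset σ).finsuppAntidiag (m + 1)) := by
    ext ω
    simp only [Set.mem_ofPred_eq, Set.mem_union, mem_coe, mem_finsuppAntidiag, subset_univ,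
      and_true, Finsupp.sum_fintype ω (fun _ e => e) fun _ => rfl]
    exact Nat.le_succ_iff
  rw [restrictTotalDegree, restrictTotalDegree, finrank_restrictSupport, finrank_restrictSupport,
    hsplit, ← Set.ncard_coe_finset]
  exact Set.ncard_union_le _ _

theorem finrank_restrictTotalDegree_fin_two_succ_le [CommRing R] [StrongRankCondition R]
    (m : ℕ) :
    finrank R (restrictTotalDegree (Fin 2) R (m + 1)) ≤
      finrank R (restrictTotalDegree (Fin 2) R m) + (m + 2) := by
  have h := finrank_restrictTotalDegree_succ_le (σ := Fin 2) (R := R) m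
  rwa [card_finsuppAntidiag_nat_eq_choose, card_univ, Fintype.card_fin,
    show 2 + (m + 1) - 1 = m + 1 + 1 by omega, Nat.choose_succ_self_right] at h

theorem totalDegree_aeval_le [CommSemiring R] {g : σ → MvPolynomial τ R}
    (hg : ∀ i, (g i).totalDegree ≤ 1) (f : MvPolynomial σ R) :
    (aeval g f).totalDegree ≤ f.totalDegree := by
  conv_lhs => rw [f.as_sum, map_sum]
  refine totalDegree_finsetSum_le fun ω hω => ?_
  rw [aeval_monomial, ← Algebra.smul_def]
  refine (totalDegree_smul_le _ _).trans ?_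
  calc (ω.prod fun i k => g i ^ k).totalDegree
      ≤ ∑ i ∈ ω.support, (g i ^ ω i).totalDegree := totalDegree_finsetProd _ _
    _ ≤ ∑ i ∈ ω.support, ω i :=
      sum_le_sum fun i _ =>
        (totalDegree_pow _ _).trans (mul_le_of_le_one_right (Nat.zero_le _) (hg i))
    _ ≤ f.totalDegree := le_totalDegree hω

theorem aeval_X_sub_C_aeval_X_add_C [CommRing R] (p : σ → R) (f : MvPolynomial σ R) :
    aeval (fun i => X i - C (p i)) (aeval (fun i => X i + C (p i)) f) = f := by
  rw [← AlgHom.comp_apply, comp_aeval]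
  simp

end MvPolynomial

theorem Finset.sum_range_succ_sub_le {α : Type*} [AddCommGroup α] [PartialOrder α]
    [IsOrderedAddMonoid α] {x y : ℕ → α} (h : ∀ r, x (r + 1) ≤ y r) (N : ℕ) :
    ∑ r ∈ range (N + 1), (x r - y r) ≤ x 0 - y N := by
  induction N with
  | zero => simp
  | succ N ih =>
    rw [sum_range_succ]
    calc _ ≤ x 0 - y N + (x (N + 1) - y (N + 1)) := add_le_add_left ih _
      _ = x 0 - y (N + 1) + (x (N + 1) - y N) := by abel
      _ ≤ x 0 - y (N + 1) := add_le_of_nonpos_right (sub_nonpos.2 (h N))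

theorem mem_vanishingSubmodule {p : Fin 2 → F} {m : ℕ} {f : MvPolynomial (Fin 2) F} :
    f ∈ vanishingSubmodule p m ↔ ∀ ω : Fin 2 →₀ ℕ, (ω.sum fun _ e => e) < m →
      coeff ω (aeval (fun i => X i + C (p i)) f) = 0 := by
  simp [vanishingSubmodule, Submodule.mem_iInf]

theorem vanishingSubmodule_antitone (p : Fin 2 → F) : Antitone (vanishingSubmodule p) :=
  fun _ _ h _ hf =>
    mem_vanishingSubmodule.2 fun ω hω => mem_vanishingSubmodule.1 hf ω (hω.trans_le h)

theorem vanishingSubmodule_inf_restrictTotalDegree_eq_bot {p : Fin 2 → F} {m n : ℕ}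
    (h : n < m) :
    vanishingSubmodule p m ⊓ restrictTotalDegree (Fin 2) F n = ⊥ := by
  refine eq_bot_iff.2 fun f hf => ?_
  obtain ⟨hvan, hdeg⟩ := Submodule.mem_inf.1 hf
  have hshift : aeval (fun i => X i + C (p i)) f = 0 := by
    ext ω
    rw [coeff_zero]
    by_cases hω : (ω.sum fun _ e => e) < m
    · exact mem_vanishingSubmodule.1 hvan ω hω
    · refine coeff_eq_zero_of_totalDegree_lt ?_
      calc _ ≤ f.totalDegree :=
            totalDegree_aeval_le (fun i => (totalDegree_add _ _).trans (by simp)) f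
        _ ≤ n := (mem_restrictTotalDegree _ _ _).1 hdeg
        _ < _ := by rw [Finsupp.sum] at hω; omega
  rw [Submodule.mem_bot, ← aeval_X_sub_C_aeval_X_add_C p f, hshift, map_zero]

section Conditions

variable {P : Finset (Fin 2 → F)} {p : Fin 2 → F} {v w : (Fin 2 → F) → ℕ} {m n : ℕ}

theorem T_mono (hvw : ∀ q ∈ P, v q ≤ w q) (hmn : m ≤ n) : T P w m ≤ T P v n :=
  inf_le_inf (restrictTotalDegree_mono hmn) <| le_iInf₂ fun q hq =>
    (iInf₂_le q hq).trans (vanishingSubmodule_antitone q (hvw q hq))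

theorem T_inf_restrictTotalDegree (h : m ≤ n) :
    T P v n ⊓ restrictTotalDegree (Fin 2) F m = T P v m := by
  rw [T, T, inf_right_comm, inf_eq_right.2 (restrictTotalDegree_mono h)]

instance (P : Finset (Fin 2 → F)) (v : (Fin 2 → F) → ℕ) (n : ℕ) :
    FiniteDimensional F (T P v n) :=
  Submodule.finiteDimensional_of_le inf_le_left

theorem T_eq_bot_of_lt (hp : p ∈ P) (h : n < v p) : T P v n = ⊥ :=
  eq_bot_iff.2 <| (le_inf (inf_le_right.trans (iInf₂_le p hp)) inf_le_left).trans
    (vanishingSubmodule_inf_restrictTotalDegree_eq_bot h).le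

theorem T_update_of_notMem [DecidableEq (Fin 2 → F)] (hp : p ∉ P) (k : ℕ) :
    T P (Function.update v p k) n = T P v n := by
  refine congrArg _ (biInf_congr fun q hq => ?_)
  rw [Function.update_of_ne (ne_of_mem_of_not_mem hq hp)]

theorem finrank_T_add_finrank_T_le (hvw : ∀ q ∈ P, v q ≤ w q) (hmn : m ≤ n) :
    finrank F (T P w n) + finrank F (T P v m) ≤ finrank F (T P v n) + finrank F (T P w m) := by
  have hsup : T P w n ⊔ T P v m ≤ T P v n :=
    sup_le (T_mono hvw le_rfl) (T_mono (fun _ _ => le_rfl) hmn)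
  have hinf : T P w n ⊓ T P v m ≤ T P w m := by
    rw [← T_inf_restrictTotalDegree (v := w) hmn]
    exact inf_le_inf_left _ inf_le_left
  rw [← Submodule.finrank_sup_add_finrank_inf_eq]
  exact add_le_add (Submodule.finrank_mono hsup) (Submodule.finrank_mono hinf)

theorem finrank_T_succ_le (P : Finset (Fin 2 → F)) (v : (Fin 2 → F) → ℕ) (m : ℕ) :
    finrank F (T P v (m + 1)) ≤ finrank F (T P v m) + (m + 2) := by
  have hsup : T P v (m + 1) ⊔ restrictTotalDegree (Fin 2) F m ≤
      restrictTotalDegree (Fin 2) F (m + 1) :=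
    sup_le inf_le_left (restrictTotalDegree_mono m.le_succ)
  have hdim :=
    Submodule.finrank_sup_add_finrank_inf_eq (T P v (m + 1)) (restrictTotalDegree (Fin 2) F m)
  rw [T_inf_restrictTotalDegree m.le_succ] at hdim
  have := Submodule.finrank_mono hsup
  have := finrank_restrictTotalDegree_fin_two_succ_le (R := F) m
  omega

end Conditions

section Defect

variable [DecidableEq (Fin 2 → F)] {P : Finset (Fin 2 → F)} {p : Fin 2 → F}
  {v : (Fin 2 → F) → ℕ} {m n : ℕ}

theorem b_eq_zero_of_lt (h : n < v p) : b P p v n = 0 := by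
  by_cases hp : p ∈ P
  · rw [b, T_eq_bot_of_lt hp h, T_eq_bot_of_lt hp (by rw [Function.update_self]; omega),
      Nat.sub_self]
  · rw [b, T_update_of_notMem hp, Nat.sub_self]

theorem natCast_b :
    (b P p v n : ℤ) = finrank F (T P v n) - finrank F (T P (Function.update v p (v p + 1)) n) :=
  Nat.cast_sub <| Submodule.finrank_mono <|
    T_mono (fun q _ => le_update_self_iff.2 (v p).le_succ q) le_rfl

theorem finsum_b_eq_sum_range {v : ℕ → (Fin 2 → F) → ℕ} (hv : ∀ r, r ≤ v r p)
    (hmn : m ≤ n) :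
    ∑ᶠ r, b P p (v r) m = ∑ r ∈ range (n + 1), b P p (v r) m :=
  finsum_eq_sum_of_support_subset _ fun r hr => by
    rw [coe_range, Set.mem_Iio, Nat.lt_succ_iff]
    by_contra! hnr
    exact hr (b_eq_zero_of_lt ((hmn.trans_lt hnr).trans_le (hv r)))

end Defect

-- The dimension of `T P v n / T P v (n - 1)`; at `n = 0` it is `0` rather than
-- `finrank F (T P v 0)`, since `n - 1` truncates.
noncomputable def finrankGraded (P : Finset (Fin 2 → F)) (v : (Fin 2 → F) → ℕ) (n : ℕ) :
    ℤ :=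
  finrank F (T P v n) - finrank F (T P v (n - 1))

section Graded

variable {P : Finset (Fin 2 → F)} {v w : (Fin 2 → F) → ℕ}

theorem finrankGraded_le (P : Finset (Fin 2 → F)) (v : (Fin 2 → F) → ℕ) (n : ℕ) :
    finrankGraded P v n ≤ n + 1 := by
  cases n with
  | zero => simp [finrankGraded]
  | succ m =>
    have := finrank_T_succ_le P v m
    rw [finrankGraded, Nat.add_sub_cancel]
    push_cast
    omega

theorem finrankGraded_nonneg (P : Finset (Fin 2 → F)) (v : (Fin 2 → F) → ℕ) (n : ℕ) :
    0 ≤ finrankGraded P v n :=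
  sub_nonneg.2 <| Nat.cast_le.2 <| Submodule.finrank_mono <| T_mono (fun _ _ => le_rfl) (n.sub_le 1)

theorem finrankGraded_anti (hvw : ∀ q ∈ P, v q ≤ w q) (n : ℕ) :
    finrankGraded P w n ≤ finrankGraded P v n := by
  have := finrank_T_add_finrank_T_le hvw (n.sub_le 1)
  simp only [finrankGraded]
  omega

theorem natCast_b_sub_natCast_b [DecidableEq (Fin 2 → F)] (p : Fin 2 → F) (n : ℕ) :
    (b P p v n : ℤ) - b P p v (n - 1) =
      finrankGraded P v n - finrankGraded P (Function.update v p (v p + 1)) n := by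
  rw [natCast_b, natCast_b, finrankGraded, finrankGraded]
  ring

end Graded

theorem sum_b_sub_sum_b_le_general [DecidableEq (Fin 2 → F)]
    (P : Finset (Fin 2 → F)) (p : Fin 2 → F) (n : ℕ)
    (v : ℕ → (Fin 2 → F) → ℕ)
    (hmono : ∀ r : ℕ, ∀ q ∈ P, v r q ≤ v (r + 1) q)
    (hstrict : ∀ r : ℕ, v r p + 1 ≤ v (r + 1) p) :
    ∑ᶠ r : ℕ, b P p (v r) n ≤ (∑ᶠ r : ℕ, b P p (v r) (n - 1)) + (n + 1) := by
  set u := fun r => Function.update (v r) p (v r p + 1)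
  have hgrow : ∀ r, r ≤ v r p := fun r => by
    induction r with
    | zero => exact Nat.zero_le _
    | succ r ih => linarith [hstrict r]
  have hstep : ∀ r, ∀ q ∈ P, u r q ≤ v (r + 1) q := fun r q hq => by
    rcases eq_or_ne q p with rfl | hqp
    · simpa [u] using hstrict r
    · simpa [u, hqp] using hmono r q hq
  rw [finsum_b_eq_sum_range hgrow le_rfl, finsum_b_eq_sum_range hgrow (n.sub_le 1),
    ← Nat.cast_le (α := ℤ)]
  push_cast
  rw [← sub_le_iff_le_add', ← sum_sub_distrib]
  calc ∑ r ∈ range (n + 1), ((b P p (v r) n : ℤ) - b P p (v r) (n - 1))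
      = ∑ r ∈ range (n + 1), (finrankGraded P (v r) n - finrankGraded P (u r) n) :=
        sum_congr rfl fun r _ => natCast_b_sub_natCast_b p n
    _ ≤ finrankGraded P (v 0) n - finrankGraded P (u n) n :=
        sum_range_succ_sub_le (fun r => finrankGraded_anti (hstep r) n) n
    _ ≤ n + 1 := by linarith [finrankGraded_le P (v 0) n, finrankGraded_nonneg P (u n) n]

/-- Let `v⁽⁰⁾ ≤ v⁽¹⁾ ≤ ⋯` be coordinatewise nondecreasing with `v⁽ʳ⁺¹⁾ ≥ v⁽ʳ⁾ + e_p`.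
Then `Σ_{r≥0} b_p(v⁽ʳ⁾, n) − Σ_{r≥0} b_p(v⁽ʳ⁾, n−1) ≤ n + 1`. -/
theorem sum_b_sub_sum_b_le [DecidableEq (Fin 2 → F)]
    (P : Finset (Fin 2 → F)) (p : Fin 2 → F) (hp : p ∈ P) (n : ℕ) (hn : 1 ≤ n)
    (v : ℕ → (Fin 2 → F) → ℕ)
    (hmono : ∀ r : ℕ, ∀ q ∈ P, v r q ≤ v (r + 1) q)
    (hstrict : ∀ r : ℕ, v r p + 1 ≤ v (r + 1) p) :
    ∑ᶠ r : ℕ, b P p (v r) n ≤ (∑ᶠ r : ℕ, b P p (v r) (n - 1)) + (n + 1) :=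
  sum_b_sub_sum_b_le_general P p n v hmono hstrict
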